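/- Let β ∈ (−1,1) and δ ≥ 0. There exist a₀ > 0 and C > 0 such that for every real a ≥ a₀ there is a unique b ∈ ℝ with Im ∫_{β}^{1} √((a + i·b) − i·x² − i·δ) dx = 0, and this unique b satisfies |b − ( (β² + β + 1)/3 + δ )| ≤ C/a, where √ denotes the principal branch of the complex square root. -/

import Mathlib

/-!
For `a > 0` the imaginary part `φ(t)` of `√(a + it)` satisfies `t = 2 φ(t) √(a + φ(t)²)`, so `φ`
is continuous and injective, hence strictly increasing, and `φ(t) = t / (2√a) + O(|t|³ a^(-5/2))`.
Consequently `b ↦ Im ∫_β^1 √(a + i(b - x² - δ)) dx` is continuous, strictly increasing, and equal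
to `(1 - β)(b - m) / (2√a)` up to `O(a^(-5/2))` when `|b - m| ≤ 1`, where `m = (β² + β + 1)/3 + δ`
is the mean of `x² + δ` over `[β, 1]`. It is therefore negative at `m - 1/a` and positive at
`m + 1/a`, so it has exactly one zero, and that zero lies between them.
-/

open Complex Set

namespace Complex

theorem re_cpow_one_div_two_pos {z : ℂ} (hz : 0 < z.re) : 0 < (z ^ (1 / 2 : ℂ)).re := by
  rw [one_div, cpow_inv_two_re]
  exact Real.sqrt_pos.2 (by linarith [norm_nonneg z])

theorem im_eq_two_mul_im_cpow_one_div_two {z : ℂ} (hz : 0 < z.re) :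
    z.im = 2 * (z ^ (1 / 2 : ℂ)).im * √(z.re + (z ^ (1 / 2 : ℂ)).im ^ 2) := by
  set w := z ^ (1 / 2 : ℂ)
  have hw : w ^ 2 = z := by simp [w]
  have hre : w.re * w.re - w.im * w.im = z.re := by rw [← hw, sq, mul_re]
  have him : w.re * w.im + w.im * w.re = z.im := by rw [← hw, sq, mul_im]
  rw [show z.re + w.im ^ 2 = w.re ^ 2 by linarith, Real.sqrt_sq (re_cpow_one_div_two_pos hz).le]
  linarith

end Complex

theorem continuous_cpow_one_div_two_add_mul_I {a : ℝ} (ha : 0 < a) :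
    Continuous fun t : ℝ => ((a : ℂ) + t * I) ^ (1 / 2 : ℂ) :=
  (by fun_prop : Continuous fun t : ℝ => (a : ℂ) + t * I).cpow continuous_const
    fun t => mem_slitPlane_iff.2 (Or.inl (by simpa using ha))

noncomputable def sqrtIm (a t : ℝ) : ℝ := (((a : ℂ) + t * I) ^ (1 / 2 : ℂ)).im

section sqrtIm

variable {a : ℝ}

theorem sqrtIm_spec (ha : 0 < a) (t : ℝ) : t = 2 * sqrtIm a t * √(a + sqrtIm a t ^ 2) := by
  simpa [sqrtIm] using im_eq_two_mul_im_cpow_one_div_two (z := a + t * I) (by simpa using ha)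

theorem continuous_sqrtIm (ha : 0 < a) : Continuous (sqrtIm a) :=
  continuous_im.comp (continuous_cpow_one_div_two_add_mul_I ha)

theorem sqrtIm_strictMono (ha : 0 < a) : StrictMono (sqrtIm a) := by
  have hinj : Function.Injective (sqrtIm a) := fun s t h => by
    rw [sqrtIm_spec ha s, sqrtIm_spec ha t, h]
  refine ((continuous_sqrtIm ha).strictMono_of_inj hinj).resolve_right fun hanti => ?_
  have hlt : sqrtIm a 1 < sqrtIm a (-1) := hanti (by norm_num)
  have hpos : 0 < sqrtIm a 1 := by
    have h := sqrtIm_spec ha 1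
    have : 0 < √(a + sqrtIm a 1 ^ 2) := Real.sqrt_pos.2 (by positivity)
    nlinarith
  have hneg : sqrtIm a (-1) < 0 := by
    have h := sqrtIm_spec ha (-1)
    have : 0 < √(a + sqrtIm a (-1) ^ 2) := Real.sqrt_pos.2 (by positivity)
    nlinarith
  linarith

theorem abs_sqrtIm_sub_le (ha : 0 < a) (t : ℝ) :
    |sqrtIm a t - t / (2 * √a)| ≤ |t| ^ 3 / (16 * a ^ 2 * √a) := by
  set φ := sqrtIm a t
  set u := √(a + φ ^ 2)
  have ht : t = 2 * φ * u := sqrtIm_spec ha t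
  have hsa : 0 < √a := Real.sqrt_pos.2 ha
  have hsa2 : √a ^ 2 = a := Real.sq_sqrt ha.le
  have hu2 : u ^ 2 = a + φ ^ 2 := Real.sq_sqrt (by positivity)
  have hu : √a ≤ u := Real.sqrt_le_sqrt (by nlinarith)
  have hgap : u - √a ≤ φ ^ 2 / (2 * √a) := by
    rw [le_div_iff₀ (by positivity)]; nlinarith
  have hφ : |φ| ≤ |t| / (2 * √a) := by
    rw [le_div_iff₀ (by positivity), ht, abs_mul, abs_mul, abs_two, abs_of_pos (hsa.trans_le hu)]
    nlinarith [mul_le_mul_of_nonneg_left hu (abs_nonneg φ)]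
  generalize √a = s at *
  subst hsa2
  calc |φ - t / (2 * s)| = |φ| * (u - s) / s := by
        rw [ht, show φ - 2 * φ * u / (2 * s) = φ * (s - u) / s by field_simp,
          abs_div, abs_mul, abs_of_pos hsa, abs_of_nonpos (by linarith : s - u ≤ 0)]
        ring
    _ ≤ |φ| * (φ ^ 2 / (2 * s)) / s := by gcongr
    _ = |φ| ^ 3 / (2 * s ^ 2) := by
        rw [← sq_abs φ]; field_simp
    _ ≤ (|t| / (2 * s)) ^ 3 / (2 * s ^ 2) := by gcongr
    _ = |t| ^ 3 / (16 * (s ^ 2) ^ 2 * s) := by field_simp; ring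

end sqrtIm

theorem StrictMono.existsUnique_eq_and_mem_Icc {α γ : Type*} [ConditionallyCompleteLinearOrder α]
    [TopologicalSpace α] [OrderTopology α] [DenselyOrdered α] [LinearOrder γ] [TopologicalSpace γ]
    [OrderClosedTopology γ] {f : α → γ} (hf : StrictMono f) (hc : Continuous f) {l r : α} {y : γ}
    (hl : f l ≤ y) (hr : y ≤ f r) : (∃! x, f x = y) ∧ ∀ x, f x = y → x ∈ Icc l r := by
  obtain ⟨x, -, hx⟩ := intermediate_value_Icc (hf.le_iff_le.1 (hl.trans hr)) hc.continuousOn ⟨hl, hr⟩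
  refine ⟨⟨x, hx, fun x' hx' => hf.injective (hx'.trans hx.symm)⟩, fun x' hx' => ?_⟩
  subst hx'
  exact ⟨hf.le_iff_le.1 hl, hf.le_iff_le.1 hr⟩

theorem integral_sub_sq_sub (β δ b : ℝ) :
    ∫ x in β..1, (b - x ^ 2 - δ) = (1 - β) * (b - ((β ^ 2 + β + 1) / 3 + δ)) := by
  simp [intervalIntegral.integral_sub, integral_pow]
  ring

noncomputable def imIntegral (a β δ b : ℝ) : ℝ := ∫ x in β..1, sqrtIm a (b - x ^ 2 - δ)

section imIntegral

variable {a β : ℝ}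

theorem im_integral_cpow_eq_imIntegral (ha : 0 < a) (β δ b : ℝ) :
    (∫ x in β..(1 : ℝ), ((a : ℂ) + b * I - I * (x : ℂ) ^ 2 - I * δ) ^ (1 / 2 : ℂ)).im =
      imIntegral a β δ b := by
  have h (x : ℝ) : (a : ℂ) + b * I - I * (x : ℂ) ^ 2 - I * δ = a + ((b - x ^ 2 - δ : ℝ) : ℂ) * I := by
    push_cast; ring
  simp_rw [h]
  exact (intervalIntegral.intervalIntegral_im (((continuous_cpow_one_div_two_add_mul_I ha).comp
    (by fun_prop : Continuous fun x : ℝ => b - x ^ 2 - δ)).intervalIntegrable _ _)).symm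

theorem imIntegral_strictMono (ha : 0 < a) (hβ : β < 1) (δ : ℝ) : StrictMono (imIntegral a β δ) := by
  intro b₁ b₂ hb
  have hc (b : ℝ) : Continuous fun x : ℝ => sqrtIm a (b - x ^ 2 - δ) :=
    (continuous_sqrtIm ha).comp (by fun_prop)
  have hlt (x : ℝ) : sqrtIm a (b₁ - x ^ 2 - δ) < sqrtIm a (b₂ - x ^ 2 - δ) :=
    sqrtIm_strictMono ha (by linarith)
  exact intervalIntegral.integral_lt_integral_of_continuousOn_of_le_of_exists_lt hβ
    (hc b₁).continuousOn (hc b₂).continuousOn (fun x _ => (hlt x).le) ⟨β, ⟨le_rfl, hβ.le⟩, hlt β⟩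

theorem continuous_imIntegral (ha : 0 < a) (β δ : ℝ) : Continuous (imIntegral a β δ) :=
  intervalIntegral.continuous_parametric_intervalIntegral_of_continuous'
    (f := fun b x => sqrtIm a (b - x ^ 2 - δ))
    ((continuous_sqrtIm ha).comp (by fun_prop : Continuous fun p : ℝ × ℝ => p.1 - p.2 ^ 2 - δ)) β 1

theorem abs_imIntegral_sub_le (ha : 0 < a) (hβ : β ∈ Icc (-1) 1) {δ b : ℝ}
    (hb : |b - ((β ^ 2 + β + 1) / 3 + δ)| ≤ 1) :
    |imIntegral a β δ b - (1 - β) * (b - ((β ^ 2 + β + 1) / 3 + δ)) / (2 * √a)| ≤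
      (1 - β) / (2 * a ^ 2 * √a) := by
  have hdiff : imIntegral a β δ b - (1 - β) * (b - ((β ^ 2 + β + 1) / 3 + δ)) / (2 * √a) =
      ∫ x in β..1, (sqrtIm a (b - x ^ 2 - δ) - (b - x ^ 2 - δ) / (2 * √a)) := by
    rw [intervalIntegral.integral_sub, intervalIntegral.integral_div, integral_sub_sq_sub, imIntegral]
    · exact ((continuous_sqrtIm ha).comp (by fun_prop)).intervalIntegrable _ _
    · exact (by fun_prop : Continuous fun x : ℝ => (b - x ^ 2 - δ) / (2 * √a)).intervalIntegrable _ _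
  have hpoint : ∀ x ∈ uIoc β 1,
      ‖sqrtIm a (b - x ^ 2 - δ) - (b - x ^ 2 - δ) / (2 * √a)‖ ≤ 1 / (2 * a ^ 2 * √a) := by
    intro x hx
    rw [uIoc_of_le hβ.2] at hx
    have hx2 : |b - x ^ 2 - δ| ≤ 2 := by
      rw [abs_le] at hb ⊢
      constructor <;> nlinarith [hx.1, hx.2, hβ.1, hβ.2]
    calc ‖sqrtIm a (b - x ^ 2 - δ) - (b - x ^ 2 - δ) / (2 * √a)‖
        ≤ |b - x ^ 2 - δ| ^ 3 / (16 * a ^ 2 * √a) := abs_sqrtIm_sub_le ha _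
      _ ≤ 2 ^ 3 / (16 * a ^ 2 * √a) := by gcongr
      _ = 1 / (2 * a ^ 2 * √a) := by field_simp; norm_num
  rw [hdiff]
  calc _ ≤ 1 / (2 * a ^ 2 * √a) * |1 - β| := intervalIntegral.norm_integral_le_of_norm_le_const hpoint
    _ = (1 - β) / (2 * a ^ 2 * √a) := by rw [abs_of_nonneg (by linarith [hβ.2])]; ring

theorem imIntegral_sub_neg_and_add_pos (ha : 0 < a) (hβ : β ∈ Ico (-1) 1) (δ : ℝ) {ε : ℝ}
    (hε : ε ≤ 1) (hεa : 1 < ε * a ^ 2) :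
    imIntegral a β δ ((β ^ 2 + β + 1) / 3 + δ - ε) < 0 ∧
      0 < imIntegral a β δ ((β ^ 2 + β + 1) / 3 + δ + ε) := by
  have hε0 : 0 < ε := by nlinarith
  have hsa : 0 < √a := Real.sqrt_pos.2 ha
  have hgap : (1 - β) / (2 * a ^ 2 * √a) < (1 - β) * ε / (2 * √a) := by
    rw [div_lt_div_iff₀ (by positivity) (by positivity)]
    nlinarith [mul_pos (mul_pos (sub_pos.2 hβ.2) hsa) hsa, sub_pos.2 hεa]
  have hβ' : β ∈ Icc (-1) 1 := Ico_subset_Icc_self hβ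
  have hm := abs_imIntegral_sub_le ha hβ' (δ := δ) (b := (β ^ 2 + β + 1) / 3 + δ - ε)
    (by rw [sub_sub_cancel_left, abs_neg, abs_of_pos hε0]; exact hε)
  have hp := abs_imIntegral_sub_le ha hβ' (δ := δ) (b := (β ^ 2 + β + 1) / 3 + δ + ε)
    (by rw [add_sub_cancel_left, abs_of_pos hε0]; exact hε)
  rw [abs_le] at hm hp
  constructor
  · have : (1 - β) * ((β ^ 2 + β + 1) / 3 + δ - ε - ((β ^ 2 + β + 1) / 3 + δ)) / (2 * √a) =
        -((1 - β) * ε / (2 * √a)) := by ring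
    linarith [hm.2]
  · have : (1 - β) * ((β ^ 2 + β + 1) / 3 + δ + ε - ((β ^ 2 + β + 1) / 3 + δ)) / (2 * √a) =
        (1 - β) * ε / (2 * √a) := by ring
    linarith [hp.1]

end imIntegral

theorem stmt12_general (β : ℝ) (hβ : β ∈ Set.Ioo (-1:ℝ) 1) (δ : ℝ) :
    ∃ a₀ : ℝ, 0 < a₀ ∧ ∃ C : ℝ, 0 < C ∧
      ∀ a : ℝ, a₀ ≤ a →
        (∃! b : ℝ,
          (∫ x in β..(1:ℝ),
            ((a : ℂ) + (b : ℂ) * Complex.I - Complex.I * (x : ℂ) ^ 2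
              - Complex.I * δ) ^ (1/2 : ℂ)).im = 0) ∧
        ∀ b : ℝ,
          (∫ x in β..(1:ℝ),
            ((a : ℂ) + (b : ℂ) * Complex.I - Complex.I * (x : ℂ) ^ 2
              - Complex.I * δ) ^ (1/2 : ℂ)).im = 0 →
          |b - ((β ^ 2 + β + 1) / 3 + δ)| ≤ C / a := by
  refine ⟨2, two_pos, 1, one_pos, fun a ha => ?_⟩
  have ha0 : 0 < a := by linarith
  have hε : 1 / a ≤ 1 := (div_le_one ha0).2 (by linarith)
  have hεa : 1 < 1 / a * a ^ 2 := by rw [one_div_mul_eq_div, sq, mul_div_cancel_left₀ _ ha0.ne']; linarith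
  obtain ⟨hneg, hpos⟩ := imIntegral_sub_neg_and_add_pos ha0 (Ioo_subset_Ico_self hβ) δ hε hεa
  obtain ⟨hunique, hmem⟩ := (imIntegral_strictMono ha0 hβ.2 δ).existsUnique_eq_and_mem_Icc
    (continuous_imIntegral ha0 β δ) hneg.le hpos.le
  simp only [im_integral_cpow_eq_imIntegral ha0]
  refine ⟨hunique, fun b hb => ?_⟩
  obtain ⟨hlo, hhi⟩ := hmem b hb
  rw [abs_sub_le_iff]
  constructor <;> linarith

/-- Theorem `infiniper`(3): for `a` large,
`Im ∫_β^1 √((a+ib) − ix² − iδ) dx = 0` has a unique real solution `b`, with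
`|b − ((β²+β+1)/3 + δ)| ≤ C/a`: the curve `Γ_{β,1}` is asymptotic to
`ℝ + i(β²+β+1)/3 + iδ`. -/
theorem stmt12 (β : ℝ) (hβ : β ∈ Set.Ioo (-1:ℝ) 1) (δ : ℝ) (hδ : 0 ≤ δ) :
    ∃ a₀ : ℝ, 0 < a₀ ∧ ∃ C : ℝ, 0 < C ∧
      ∀ a : ℝ, a₀ ≤ a →
        (∃! b : ℝ,
          (∫ x in β..(1:ℝ),
            ((a : ℂ) + (b : ℂ) * Complex.I - Complex.I * (x : ℂ) ^ 2
              - Complex.I * δ) ^ (1/2 : ℂ)).im = 0) ∧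
        ∀ b : ℝ,
          (∫ x in β..(1:ℝ),
            ((a : ℂ) + (b : ℂ) * Complex.I - Complex.I * (x : ℂ) ^ 2
              - Complex.I * δ) ^ (1/2 : ℂ)).im = 0 →
          |b - ((β ^ 2 + β + 1) / 3 + δ)| ≤ C / a :=
  stmt12_general β hβ δ
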